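/- arXiv:2210.03406 — 2 statements merged into one kernel-verified Lean document; each statement's English description precedes it below -/
import Mathlib

section
/- Let L be a field of characteristic p containing an element f ≠ 0, and let M = L[t]/(t^p − f^{p−1}t − a) for some a ∈ L such that the polynomial is irreducible. Then the map t ↦ t + f extends to an L-automorphism of M of order p, generating a cyclic Galois group of M/L of order p. -/
/-!
Since `(t + f)^p - f^{p-1}(t + f) = t^p - f^{p-1}t` in characteristic `p`, the element `t + f` is
again a root of the defining polynomial, so `t ↦ t + f` lifts to an `L`-automorphism `σ` of the
field `M`. Its powers translate `t` by the multiples `n f`, so `σ` has prime order `p = [M : L]`.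
As `|Aut(M/L)| ≤ [M : L]` always holds, `Aut(M/L) = ⟨σ⟩` has exactly `[M : L]` elements, which
makes `M/L` Galois.
-/

open Polynomial Module

section OrderOfEqFinrank

variable {L M : Type*} [Field L] [Field M] [Algebra L M] [FiniteDimensional L M]
  {σ : M ≃ₐ[L] M}

theorem AlgEquiv.card_eq_finrank_of_orderOf_eq (hσ : orderOf σ = finrank L M) :
    Nat.card (M ≃ₐ[L] M) = finrank L M :=
  le_antisymm (Nat.card_eq_fintype_card (α := M ≃ₐ[L] M) ▸ AlgEquiv.card_le)
    (hσ ▸ Nat.card_zpowers σ ▸ Subgroup.card_le_card_group _)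

theorem IsGalois.of_orderOf_eq_finrank (hσ : orderOf σ = finrank L M) : IsGalois L M :=
  IsGalois.of_card_aut_eq_finrank L M (AlgEquiv.card_eq_finrank_of_orderOf_eq hσ)

theorem AlgEquiv.zpowers_eq_top_of_orderOf_eq_finrank (hσ : orderOf σ = finrank L M) :
    Subgroup.zpowers σ = ⊤ :=
  Subgroup.eq_top_of_card_eq _ <| by
    rw [Nat.card_zpowers, hσ, AlgEquiv.card_eq_finrank_of_orderOf_eq hσ]

end OrderOfEqFinrank

theorem AlgEquiv.pow_apply_eq_add_nsmul_of_apply_eq_add {R A : Type*} [CommSemiring R]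
    [Semiring A] [Algebra R A] {σ : A ≃ₐ[R] A} {x : A} {c : R}
    (hσ : σ x = x + algebraMap R A c) (n : ℕ) : (σ ^ n) x = x + n • algebraMap R A c := by
  induction n with
  | zero => simp
  | succ n ih => rw [pow_succ', AlgEquiv.mul_apply, ih, map_add, hσ, map_nsmul,
      AlgEquiv.commutes, succ_nsmul', add_assoc]

namespace Polynomial

variable {R : Type*} [CommRing R] {p : ℕ}

theorem natDegree_X_pow_sub_C_mul_X_sub_C [Nontrivial R] (hp : 1 < p) (c a : R) :
    (X ^ p - C c * X - C a : R[X]).natDegree = p := by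
  rw [sub_sub, natDegree_sub_eq_left_of_natDegree_lt] <;>
    rw [natDegree_X_pow]
  exact natDegree_linear_le.trans_lt hp

theorem aeval_add_algebraMap_X_pow_sub_C_mul_X_sub_C {A : Type*} [CommRing A] [Algebra R A]
    [Fact p.Prime] [CharP A p] (x : A) (f a : R) :
    aeval (x + algebraMap R A f) (X ^ p - C (f ^ (p - 1)) * X - C a) =
      aeval x (X ^ p - C (f ^ (p - 1)) * X - C a) := by
  have hf : algebraMap R A f ^ p = algebraMap R A f ^ (p - 1) * algebraMap R A f := by
    rw [← pow_succ, Nat.sub_add_cancel (Fact.out : p.Prime).one_le]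
  simp only [map_sub, map_mul, map_pow, aeval_X, aeval_C, add_pow_char]
  linear_combination hf

end Polynomial

namespace AdjoinRoot

variable {K : Type*} [Field K] {P : K[X]} [Fact (Irreducible P)]

instance : FiniteDimensional K (AdjoinRoot P) :=
  (powerBasis (Fact.out : Irreducible P).ne_zero).finite

instance {p : ℕ} [CharP K p] : CharP (AdjoinRoot P) p :=
  charP_of_injective_algebraMap (algebraMap K _).injective p

noncomputable def algEquivOfAevalEqZero (y : AdjoinRoot P) (hy : aeval y P = 0) :
    AdjoinRoot P ≃ₐ[K] AdjoinRoot P :=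
  AlgEquiv.ofBijective (liftAlgHom P (Algebra.ofId K _) y hy)
    (Algebra.IsAlgebraic.algHom_bijective _)

@[simp]
theorem algEquivOfAevalEqZero_root (y : AdjoinRoot P) (hy : aeval y P = 0) :
    algEquivOfAevalEqZero y hy (root P) = y :=
  liftAlgHom_root _ _ _ hy

theorem algEquiv_ext {σ τ : AdjoinRoot P ≃ₐ[K] AdjoinRoot P} (h : σ (root P) = τ (root P)) :
    σ = τ :=
  AlgEquiv.coe_toAlgHom_injective (algHom_ext h)

theorem orderOf_algEquiv_eq_of_apply_root_eq_add {p : ℕ} [Fact p.Prime] [CharP K p]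
    {σ : AdjoinRoot P ≃ₐ[K] AdjoinRoot P} {c : K} (hc : c ≠ 0)
    (hσ : σ (root P) = root P + algebraMap K _ c) : orderOf σ = p := by
  refine orderOf_eq_prime (algEquiv_ext ?_) fun h ↦ hc ?_
  · rw [AlgEquiv.pow_apply_eq_add_nsmul_of_apply_eq_add hσ, nsmul_eq_mul, CharP.cast_eq_zero,
      zero_mul, add_zero, AlgEquiv.one_apply]
  · rwa [h, AlgEquiv.one_apply, left_eq_add, FaithfulSMul.algebraMap_eq_zero_iff] at hσ

end AdjoinRoot

open AdjoinRoot in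
/-- Let `L` be a field of characteristic `p` containing `f ≠ 0`, and let
`M = L[t]/(t^p − f^{p−1}t − a)` with the polynomial irreducible.  Then `t ↦ t + f`
extends to an `L`-automorphism `σ` of `M` of order exactly `p`, and `M/L` is Galois
with cyclic Galois group generated by `σ`. -/
theorem stmt12 (p : ℕ) (hp : p.Prime) (L : Type*) [Field L] [CharP L p]
    (f : L) (hf : f ≠ 0) (a : L)
    (hirr : Fact (Irreducible (X ^ p - C (f ^ (p - 1)) * X - C a : L[X]))) :
    IsGalois L (AdjoinRoot (X ^ p - C (f ^ (p - 1)) * X - C a : L[X])) ∧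
    ∃ σ : AdjoinRoot (X ^ p - C (f ^ (p - 1)) * X - C a : L[X]) ≃ₐ[L]
        AdjoinRoot (X ^ p - C (f ^ (p - 1)) * X - C a : L[X]),
      σ (AdjoinRoot.root _) = AdjoinRoot.root _ + algebraMap L _ f ∧
      orderOf σ = p ∧
      ∀ τ : AdjoinRoot (X ^ p - C (f ^ (p - 1)) * X - C a : L[X]) ≃ₐ[L]
          AdjoinRoot (X ^ p - C (f ^ (p - 1)) * X - C a : L[X]),
        τ ∈ Subgroup.zpowers σ := by
  have : Fact p.Prime := ⟨hp⟩
  set P : L[X] := X ^ p - C (f ^ (p - 1)) * X - C a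
  have hroot : aeval (root P + algebraMap L _ f) P = 0 := by
    rw [aeval_add_algebraMap_X_pow_sub_C_mul_X_sub_C, aeval_eq, mk_self]
  set σ := algEquivOfAevalEqZero _ hroot
  have hσ : σ (root P) = root P + algebraMap L _ f := algEquivOfAevalEqZero_root ..
  have horder : orderOf σ = p := orderOf_algEquiv_eq_of_apply_root_eq_add hf hσ
  have hfinrank : finrank L (AdjoinRoot P) = p :=
    finrank_quotient_span_eq_natDegree.trans (natDegree_X_pow_sub_C_mul_X_sub_C hp.one_lt _ _)
  have horder' : orderOf σ = finrank L (AdjoinRoot P) := horder.trans hfinrank.symm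
  refine ⟨IsGalois.of_orderOf_eq_finrank horder', σ, hσ, horder, fun τ ↦ ?_⟩
  rw [AlgEquiv.zpowers_eq_top_of_orderOf_eq_finrank horder']
  exact Subgroup.mem_top τ
end

section
/- Let A ⊆ B be an extension of integral domains with B integral over A, let K = Frac(A), L = Frac(B), and suppose [L : K] = n. Let I ⊆ A be a maximal ideal and suppose B ⊗_A K → L is an isomorphism and B ⊗_A (A/I) is a field of degree n over A/I. If A is a DVR with maximal ideal I, then B is a DVR (in particular B is normal). -/
open TensorProduct IsLocalRing

/-!
Since `κ ⊗_A B ≅ B ⧸ 𝔪_A B` is a field, `𝔪_A B` is a maximal ideal; as `B` is integral over the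
local ring `A`, every maximal ideal of `B` contracts to `𝔪_A` and hence contains `𝔪_A B`, so `B` is
local with maximal ideal `𝔪_A B = (ϖ)` for a uniformizer `ϖ` of `A`. A noetherian local domain
whose maximal ideal is principal and nonzero is a discrete valuation ring.
-/

theorem Ideal.isMaximal_map_of_isField_tensorProduct {A B : Type*} [CommRing A] [CommRing B]
    [Algebra A B] (I : Ideal A) (h : IsField ((A ⧸ I) ⊗[A] B)) :
    (I.map (algebraMap A B)).IsMaximal :=
  Ideal.Quotient.maximal_of_isField _
    (MulEquiv.isField h (Algebra.TensorProduct.quotIdealMapEquivQuotTensor B I).toMulEquiv)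

section IntegralOverLocal

variable {A B : Type*} [CommRing A] [IsLocalRing A] [CommRing B] [Algebra A B]
  [Algebra.IsIntegral A B]

theorem Ideal.eq_map_maximalIdeal_of_isMaximal
    (hmax : ((maximalIdeal A).map (algebraMap A B)).IsMaximal) (M : Ideal B) [M.IsMaximal] :
    M = (maximalIdeal A).map (algebraMap A B) := by
  have hcomap : M.comap (algebraMap A B) = maximalIdeal A :=
    IsLocalRing.eq_maximalIdeal (Ideal.isMaximal_comap_of_isIntegral_of_isMaximal M)
  refine (hmax.eq_of_le Ideal.IsPrime.ne_top' ?_).symm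
  exact hcomap ▸ Ideal.map_comap_le

theorem IsLocalRing.of_isMaximal_map_maximalIdeal
    (hmax : ((maximalIdeal A).map (algebraMap A B)).IsMaximal) : IsLocalRing B :=
  .of_unique_max_ideal ⟨_, hmax, fun M _ ↦ Ideal.eq_map_maximalIdeal_of_isMaximal hmax M⟩

end IntegralOverLocal

theorem IsDiscreteValuationRing.of_maximalIdeal_eq_span_singleton {R : Type*} [CommRing R]
    [IsDomain R] [IsNoetherianRing R] [IsLocalRing R] {ϖ : R} (hϖ : ϖ ≠ 0)
    (h : IsLocalRing.maximalIdeal R = Ideal.span {ϖ}) : IsDiscreteValuationRing R := by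
  have hnf : ¬IsField R := by
    rw [isField_iff_maximalIdeal_eq, h, Ideal.span_singleton_eq_bot]
    exact hϖ
  have hprin : (IsLocalRing.maximalIdeal R).IsPrincipal := ⟨⟨ϖ, h⟩⟩
  exact ((IsDiscreteValuationRing.TFAE R hnf).out 0 4).mpr hprin

theorem stmt14_general (A : Type*) [CommRing A] [IsDomain A] [IsDiscreteValuationRing A]
    (B : Type*) [CommRing B] [IsDomain B] [Algebra A B] [Module.Finite A B]
    (hinj : Function.Injective (algebraMap A B))
    (h3 : IsField (IsLocalRing.ResidueField A ⊗[A] B)) :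
    IsDiscreteValuationRing B ∧ IsIntegrallyClosed B := by
  have : IsNoetherianRing B := Algebra.FiniteType.isNoetherianRing A B
  have hmax : ((maximalIdeal A).map (algebraMap A B)).IsMaximal :=
    Ideal.isMaximal_map_of_isField_tensorProduct _ h3
  have : IsLocalRing B := .of_isMaximal_map_maximalIdeal hmax
  obtain ⟨ϖ, hϖ⟩ := IsDiscreteValuationRing.exists_irreducible A
  have hspan : maximalIdeal B = Ideal.span {algebraMap A B ϖ} := by
    rw [← eq_maximalIdeal hmax,
      (IsDiscreteValuationRing.irreducible_iff_uniformizer ϖ).mp hϖ, Ideal.map_span,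
      Set.image_singleton]
  have : IsDiscreteValuationRing B := .of_maximalIdeal_eq_span_singleton
    ((map_ne_zero_iff _ hinj).mpr hϖ.ne_zero) hspan
  exact ⟨this, inferInstance⟩

/-- Let `A` be a DVR with fraction field `K` and residue field `κ`, and let `B` be a
finite `A`-algebra which is a domain, such that `K ⊗_A B` is a field of `K`-dimension
`n` and `κ ⊗_A B` is a field of `κ`-dimension `n`.  Then `B` is a discrete valuation
ring; in particular `B` is integrally closed (normal). -/
theorem stmt14 (A : Type*) [CommRing A] [IsDomain A] [IsDiscreteValuationRing A]
    (B : Type*) [CommRing B] [IsDomain B] [Algebra A B] [Module.Finite A B]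
    (hinj : Function.Injective (algebraMap A B))
    (n : ℕ) (hn : 0 < n)
    (h1 : IsField (FractionRing A ⊗[A] B))
    (h2 : Module.finrank (FractionRing A) (FractionRing A ⊗[A] B) = n)
    (h3 : IsField (IsLocalRing.ResidueField A ⊗[A] B))
    (h4 : Module.finrank (IsLocalRing.ResidueField A) (IsLocalRing.ResidueField A ⊗[A] B) = n) :
    IsDiscreteValuationRing B ∧ IsIntegrallyClosed B :=
  stmt14_general A B hinj h3
end
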